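/- arXiv:1506.00732 — 7 statements merged into one kernel-verified Lean document; each statement's English description precedes it below -/
import Mathlib

section
/- Let A be a commutative (or anticommutative) algebra. Then the 2^n-th power of A is contained in the n-th right power of A; in particular, if A is right nilpotent of index n, then A is nilpotent of index at most 2^n. -/
/-- Left-normed product `((...(x₁x₂)...)x_{n-1})x_n` (junk value `0` for `n = 0`). -/
def lnProd {A : Type*} [Mul A] [Zero A] : ∀ {n : ℕ}, (Fin n → A) → A
  | 0, _ => 0
  | _ + 1, x => (List.ofFn fun i => x i.succ).foldl (· * ·) (x 0)

/-- `d` is a left Leibniz-derivation of order `n`. -/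
def IsLeftLeibnizDer (F : Type*) {A : Type*} [Field F] [NonUnitalNonAssocRing A]
    [Module F A] (n : ℕ) (d : A →ₗ[F] A) : Prop :=
  ∀ x : Fin n → A, d (lnProd x) = ∑ i, lnProd (Function.update x i (d (x i)))

/-- Arrangements of brackets on a product of `n` factors. -/
inductive BTree : ℕ → Type
  | leaf : BTree 1
  | node : ∀ {m k : ℕ}, BTree m → BTree k → BTree (m + k)

/-- The product of `x 0, ..., x (n-1)` with the arrangement of brackets `t`. -/
def BTree.eval {A : Type*} [Mul A] : ∀ {n : ℕ}, BTree n → (Fin n → A) → A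
  | _, .leaf, x => x 0
  | _, .node (m := m) (k := k) t u, x =>
      (BTree.eval t fun i => x (Fin.castAdd k i)) * (BTree.eval u fun j => x (Fin.natAdd m j))

/-- `d` is an `f`-Leibniz-derivation for the arrangement of brackets `t`. -/
def IsLeibnizDerWrt (F : Type*) {A : Type*} [Field F] [NonUnitalNonAssocRing A]
    [Module F A] {n : ℕ} (t : BTree n) (d : A →ₗ[F] A) : Prop :=
  ∀ x : Fin n → A, d (t.eval x) = ∑ i, t.eval (Function.update x i (d (x i)))

/-- The product of two submodules of a (nonassociative, nonunital) algebra: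
the span of all products `s * t`, `s ∈ S`, `t ∈ T`. -/
def subMul (F : Type*) {A : Type*} [Field F] [NonUnitalNonAssocRing A] [Module F A]
    (S T : Submodule F A) : Submodule F A :=
  Submodule.span F {z | ∃ s ∈ S, ∃ t ∈ T, z = s * t}

/-- `algPow F S k` is the power `S^(k+1)`, where `S^1 = S` and
`S^n = Σ_{i=1}^{n-1} S^i S^(n-i)`. -/
def algPow (F : Type*) {A : Type*} [Field F] [NonUnitalNonAssocRing A] [Module F A]
    (S : Submodule F A) : ℕ → Submodule F A
  | 0 => S
  | n + 1 => ⨆ i : Fin (n + 1), subMul F (algPow F S i) (algPow F S (n - (i : ℕ)))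
  termination_by k => k
  decreasing_by all_goals omega

/-- `rpow F S k` is the right power `S^<k+1>`: `S^<1> = S`, `S^<n> = S^<n-1> S`. -/
def rpow (F : Type*) {A : Type*} [Field F] [NonUnitalNonAssocRing A] [Module F A]
    (S : Submodule F A) : ℕ → Submodule F A
  | 0 => S
  | n + 1 => subMul F (rpow F S n) S

lemma subMul_mono (F : Type*) {A : Type*} [Field F] [NonUnitalNonAssocRing A] [Module F A]
    {S S' T T' : Submodule F A} (hS : S ≤ S') (hT : T ≤ T') :
    subMul F S T ≤ subMul F S' T' :=
  Submodule.span_mono fun _z ⟨s, hs, t, ht, hz⟩ => ⟨s, hS hs, t, hT ht, hz⟩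

lemma subMul_swap (F : Type*) {A : Type*} [Field F] [NonUnitalNonAssocRing A] [Module F A]
    (hca : (∀ x y : A, x * y = y * x) ∨ (∀ x y : A, x * y = -(y * x)))
    (S T : Submodule F A) : subMul F S T ≤ subMul F T S := by
  apply Submodule.span_le.2
  rintro z ⟨s, hs, t, ht, rfl⟩
  have hmem : t * s ∈ subMul F T S := Submodule.subset_span ⟨t, ht, s, hs, rfl⟩
  rcases hca with h | h
  · rw [h]; exact hmem
  · rw [h]; exact (subMul F T S).neg_mem hmem

lemma algPow_zero (F : Type*) {A : Type*} [Field F] [NonUnitalNonAssocRing A] [Module F A]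
    (S : Submodule F A) : algPow F S 0 = S := by rw [algPow]

lemma algPow_succ (F : Type*) {A : Type*} [Field F] [NonUnitalNonAssocRing A] [Module F A]
    (S : Submodule F A) (n : ℕ) :
    algPow F S (n + 1)
      = ⨆ i : Fin (n + 1), subMul F (algPow F S i) (algPow F S (n - (i : ℕ))) := by
  rw [algPow]

lemma algPow_succ_le (F : Type*) {A : Type*} [Field F] [NonUnitalNonAssocRing A] [Module F A]
    (n : ℕ) : algPow F (⊤ : Submodule F A) (n + 1) ≤ algPow F (⊤ : Submodule F A) n := by
  induction n using Nat.strong_induction_on with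
  | _ n ih =>
    cases n with
    | zero => rw [algPow_zero]; exact le_top
    | succ m =>
      rw [algPow_succ]
      apply iSup_le
      intro i
      rw [algPow_succ F (⊤ : Submodule F A) m]
      rcases Nat.lt_or_ge (i : ℕ) (m + 1) with hi | hi
      · refine le_trans ?_ (le_iSup _ (⟨(i : ℕ), hi⟩ : Fin (m + 1)))
        refine subMul_mono F le_rfl ?_
        have hrw : m + 1 - (i : ℕ) = (m - (i : ℕ)) + 1 := by omega
        rw [hrw]
        exact ih _ (by omega)
      · have hi' : (i : ℕ) = m + 1 := by omega
        refine le_trans ?_ (le_iSup _ (⟨m, by omega⟩ : Fin (m + 1)))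
        simp only [hi', Nat.sub_self]
        exact subMul_mono F (ih m (by omega)) le_rfl

lemma algPow_anti (F : Type*) {A : Type*} [Field F] [NonUnitalNonAssocRing A] [Module F A]
    {k m : ℕ} (h : k ≤ m) :
    algPow F (⊤ : Submodule F A) m ≤ algPow F (⊤ : Submodule F A) k := by
  induction m with
  | zero => obtain rfl := Nat.le_zero.1 h; exact le_rfl
  | succ m ih =>
    rcases Nat.lt_or_ge k (m + 1) with hk | hk
    · exact (algPow_succ_le F m).trans (ih (by omega))
    · have : k = m + 1 := by omega
      subst this; exact le_rfl

/-- For a commutative or anticommutative algebra `A`,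
`A^(2^m) ⊆ A^<m>` for every `m ≥ 1` (here `m = n + 1`); in particular, if `A` is
right nilpotent of index `m` then `A` is nilpotent of index at most `2^m`. -/
theorem stmt0 {F A : Type*} [Field F] [NonUnitalNonAssocRing A] [Module F A]
    (hca : (∀ x y : A, x * y = y * x) ∨ (∀ x y : A, x * y = -(y * x))) (n : ℕ) :
    algPow F (⊤ : Submodule F A) (2 ^ (n + 1) - 1) ≤ rpow F (⊤ : Submodule F A) n ∧
      (rpow F (⊤ : Submodule F A) n = ⊥ →
        algPow F (⊤ : Submodule F A) (2 ^ (n + 1) - 1) = ⊥) := by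
  have hle : ∀ n : ℕ,
      algPow F (⊤ : Submodule F A) (2 ^ (n + 1) - 1) ≤ rpow F (⊤ : Submodule F A) n := by
    intro n
    induction n with
    | zero => exact le_trans le_top (le_of_eq (rfl : (⊤ : Submodule F A) = rpow F ⊤ 0))
    | succ n ih =>
      have h1 : (1 : ℕ) ≤ 2 ^ (n + 1) := Nat.one_le_two_pow
      have h2 : 2 ^ (n + 2) = 2 * 2 ^ (n + 1) := by ring
      have hM : 2 ^ (n + 2) - 1 = (2 ^ (n + 2) - 2) + 1 := by omega
      rw [hM, algPow_succ]
      apply iSup_le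
      intro i
      show subMul F _ _ ≤ subMul F (rpow F (⊤ : Submodule F A) n) ⊤
      rcases Nat.lt_or_ge (i : ℕ) (2 ^ (n + 1) - 1) with hi | hi
      · have hge : 2 ^ (n + 1) - 1 ≤ 2 ^ (n + 2) - 2 - (i : ℕ) := by omega
        refine le_trans (subMul_mono F le_top ((algPow_anti F hge).trans ih)) ?_
        exact subMul_swap F hca _ _
      · exact subMul_mono F ((algPow_anti F hi).trans ih) le_top
  exact ⟨hle n, fun h => le_bot_iff.1 (h ▸ hle n)⟩
end

section
/- Let A be an algebra over a field of characteristic zero and f an arrangement of brackets on a product of length n ≥ 2. If every linear endomorphism of A is an f-Leibniz-derivation of A, then A satisfies the identity [x_1,...,x_n]_f = 0. -/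
/-- if every linear endomorphism of `A` is an `f`-Leibniz-derivation,
then `A` satisfies the identity `[x₁,...,xₙ]_f = 0`. -/
theorem stmt1 {F A : Type*} [Field F] [CharZero F] [NonUnitalNonAssocRing A] [Module F A]
    {n : ℕ} (hn : 2 ≤ n) (t : BTree n)
    (h : ∀ d : A →ₗ[F] A, IsLeibnizDerWrt F t d) :
    ∀ x : Fin n → A, t.eval x = 0 := by
  intro x
  have h1 := h LinearMap.id x
  simp only [LinearMap.id_coe, id_eq, Function.update_eq_self] at h1
  rw [Finset.sum_const, Finset.card_univ, Fintype.card_fin] at h1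
  have hz : ((n : F) - 1) • t.eval x = 0 := by
    rw [sub_smul, one_smul, Nat.cast_smul_eq_nsmul, ← h1, sub_self]
  have hne : (n : F) - 1 ≠ 0 := by
    exact sub_ne_zero.mpr (by exact_mod_cast (by omega : n ≠ 1))
  calc t.eval x = ((n : F) - 1)⁻¹ • (((n : F) - 1) • t.eval x) := by
        rw [smul_smul, inv_mul_cancel₀ hne, one_smul]
    _ = 0 := by rw [hz, smul_zero]
end

section
/- If A is an algebra with unity over a field of characteristic zero, then for any arrangement of brackets f of length n ≥ 2, every f-Leibniz-derivation of A is a derivation of A. -/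
lemma BTree.pos : ∀ {n : ℕ}, BTree n → 1 ≤ n := by
  intro n t; induction t with
  | leaf => exact le_refl 1
  | node u v hu hv => omega

lemma eval_all_one {A : Type*} [MulOneClass A] : ∀ {n : ℕ} (t : BTree n) (x : Fin n → A),
    (∀ j, x j = 1) → t.eval x = 1 := by
  intro n t; induction t with
  | leaf => intro x h; exact h 0
  | node u v hu hv =>
    intro x h
    rw [BTree.eval, hu _ (fun j => h _), hv _ (fun j => h _), one_mul]

lemma eval_zero {A : Type*} [MulZeroClass A] : ∀ {n : ℕ} (t : BTree n) (x : Fin n → A)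
    (i : Fin n), x i = 0 → t.eval x = 0 := by
  intro n t; induction t with
  | leaf => intro x i h; rw [BTree.eval, Subsingleton.elim 0 i, h]
  | node u v hu hv =>
    intro x i h
    cases i using Fin.addCases with
    | left i => rw [BTree.eval, hu _ i h, zero_mul]
    | right i => rw [BTree.eval, hv _ i h, mul_zero]

lemma eval_single {A : Type*} [MulOneClass A] : ∀ {n : ℕ} (t : BTree n) (x : Fin n → A)
    (i : Fin n), (∀ j, j ≠ i → x j = 1) → t.eval x = x i := by
  intro n t; induction t with
  | leaf => intro x i h; rw [BTree.eval, Subsingleton.elim (0 : Fin 1) i]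
  | node u v hu hv =>
    intro x i h
    cases i using Fin.addCases with
    | left i =>
      rw [BTree.eval, hu _ i (fun j hj => h _ (by simpa using hj)),
        eval_all_one v _ (fun j => h _ (by
          intro hc
          have := congrArg Fin.val hc
          simp [Fin.natAdd, Fin.castAdd] at this
          omega)), mul_one]
    | right i =>
      rw [BTree.eval, hv _ i (fun j hj => h _ (by
          intro hc; apply hj; ext; have := congrArg Fin.val hc; simpa using this)),
        eval_all_one u _ (fun j => h _ (by
          intro hc
          have := congrArg Fin.val hc
          simp [Fin.natAdd, Fin.castAdd] at this
          omega)), one_mul]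

lemma eval_append {A : Type*} [Mul A] {m k : ℕ} (u : BTree m) (v : BTree k)
    (a : Fin m → A) (b : Fin k → A) :
    (BTree.node u v).eval (Fin.append a b) = u.eval a * v.eval b := by
  rw [BTree.eval]
  congr 1 <;> exact congrArg _ (funext fun i => by simp)

lemma update_append_left {A : Type*} {m k : ℕ} (a : Fin m → A) (b : Fin k → A)
    (i : Fin m) (c : A) :
    Function.update (Fin.append a b) (Fin.castAdd k i) c
      = Fin.append (Function.update a i c) b := by
  funext j
  cases j using Fin.addCases with
  | left j =>
    simp [Function.update_apply, Fin.castAdd_inj]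
  | right j =>
    have hne : Fin.natAdd m j ≠ Fin.castAdd k i := by
      intro hc; have := congrArg Fin.val hc; simp at this; omega
    simp [Function.update_apply, hne, Fin.append_right]

lemma update_append_right {A : Type*} {m k : ℕ} (a : Fin m → A) (b : Fin k → A)
    (j : Fin k) (c : A) :
    Function.update (Fin.append a b) (Fin.natAdd m j) c
      = Fin.append a (Function.update b j c) := by
  funext i
  cases i using Fin.addCases with
  | left i =>
    have hne : Fin.castAdd k i ≠ Fin.natAdd m j := by
      intro hc; have := congrArg Fin.val hc; simp at this; omega
    simp [Function.update_apply, hne, Fin.append_left]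
  | right i =>
    rcases eq_or_ne i j with rfl | hne
    · simp
    · have h1 : Fin.natAdd m i ≠ Fin.natAdd m j := by
        intro hc; apply hne; ext; have := congrArg Fin.val hc; simpa using this
      simp [Function.update_apply, h1, hne]

lemma eval_one' {A : Type*} [MulOneClass A] (t : BTree 1) (x : Fin 1 → A) :
    t.eval x = x 0 :=
  eval_single t x 0 (fun j hj => absurd (Subsingleton.elim j 0) hj)

lemma leib_left {F A : Type*} [Field F] [NonAssocRing A] [Module F A] {m k : ℕ}
    (u : BTree m) (v : BTree k) (d : A →ₗ[F] A) (hd1 : d 1 = 0)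
    (hd : IsLeibnizDerWrt F (BTree.node u v) d) : IsLeibnizDerWrt F u d := by
  intro x
  have h := hd (Fin.append x (fun _ => (1:A)))
  rw [eval_append, eval_all_one v _ (fun _ => rfl), mul_one, Fin.sum_univ_add] at h
  simp only [Fin.append_left, Fin.append_right, update_append_left, update_append_right,
    hd1] at h
  have h2 : ∀ j : Fin k,
      (BTree.node u v).eval (Fin.append x (Function.update (fun _ => (1:A)) j 0)) = 0 :=
    fun j => eval_zero _ _ (Fin.natAdd m j) (by rw [Fin.append_right, Function.update_self])
  rw [Finset.sum_eq_zero (fun j _ => h2 j), add_zero] at h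
  rw [h]
  exact Finset.sum_congr rfl fun i _ => by
    rw [eval_append, eval_all_one v _ (fun _ => rfl), mul_one]

lemma leib_right {F A : Type*} [Field F] [NonAssocRing A] [Module F A] {m k : ℕ}
    (u : BTree m) (v : BTree k) (d : A →ₗ[F] A) (hd1 : d 1 = 0)
    (hd : IsLeibnizDerWrt F (BTree.node u v) d) : IsLeibnizDerWrt F v d := by
  intro x
  have h := hd (Fin.append (fun _ => (1:A)) x)
  rw [eval_append, eval_all_one u _ (fun _ => rfl), one_mul, Fin.sum_univ_add] at h
  simp only [Fin.append_left, Fin.append_right, update_append_left, update_append_right,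
    hd1] at h
  have h2 : ∀ j : Fin m,
      (BTree.node u v).eval (Fin.append (Function.update (fun _ => (1:A)) j 0) x) = 0 :=
    fun j => eval_zero _ _ (Fin.castAdd k j) (by rw [Fin.append_left, Function.update_self])
  rw [Finset.sum_eq_zero (fun j _ => h2 j), zero_add] at h
  rw [h]
  exact Finset.sum_congr rfl fun i _ => by
    rw [eval_append, eval_all_one u _ (fun _ => rfl), one_mul]

lemma d_one_zero {F A : Type*} [Field F] [CharZero F] [NonAssocRing A] [Module F A] {n : ℕ}
    (hn : 2 ≤ n) (t : BTree n) (d : A →ₗ[F] A) (hd : IsLeibnizDerWrt F t d) : d 1 = 0 := by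
  have h := hd (fun _ => 1)
  rw [eval_all_one t _ (fun _ => rfl)] at h
  have h2 : ∀ i : Fin n, t.eval (Function.update (fun _ => (1:A)) i (d 1)) = d 1 := fun i => by
    rw [eval_single t _ i (fun j hj => Function.update_of_ne hj _ _), Function.update_self]
  rw [Finset.sum_congr rfl (fun i _ => h2 i), Finset.sum_const, Finset.card_univ,
    Fintype.card_fin] at h
  have h3 : (((n : ℤ) - 1 : ℤ) : F) • d 1 = 0 := by
    rw [Int.cast_smul_eq_zsmul, sub_smul, natCast_zsmul, one_smul, ← h, sub_self]
  have h4 : (((n : ℤ) - 1 : ℤ) : F) ≠ 0 := by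
    rw [Int.cast_ne_zero]
    omega
  rcases smul_eq_zero.mp h3 with hc | hc
  · exact absurd hc h4
  · exact hc

lemma key {F A : Type*} [Field F] [NonAssocRing A] [Module F A] :
    ∀ {n : ℕ} (t : BTree n) (d : A →ₗ[F] A), 2 ≤ n → d 1 = 0 → IsLeibnizDerWrt F t d →
      ∀ x y : A, d (x * y) = d x * y + x * d y := by
  intro n t
  induction t with
  | leaf => intro d hn; omega
  | @node m k u v hu hv =>
    intro d hn hd1 hd x y
    by_cases hm : 2 ≤ m
    · exact hu d hm hd1 (leib_left u v d hd1 hd) x y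
    · by_cases hk : 2 ≤ k
      · exact hv d hk hd1 (leib_right u v d hd1 hd) x y
      · have hm1 : m = 1 := by have := u.pos; omega
        have hk1 : k = 1 := by have := v.pos; omega
        subst hm1; subst hk1
        have h := hd (Fin.append (fun _ : Fin 1 => x) (fun _ : Fin 1 => y))
        rw [eval_append, eval_one' u, eval_one' v, Fin.sum_univ_add, Fin.sum_univ_one,
          Fin.sum_univ_one, Fin.append_left, Fin.append_right, update_append_left,
          update_append_right, eval_append, eval_append, eval_one' u, eval_one' v,
          eval_one' u, eval_one' v, Function.update_self, Function.update_self] at h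
        exact h

/-- for a unital algebra, every `f`-Leibniz-derivation is a derivation. -/
theorem stmt3 {F A : Type*} [Field F] [CharZero F] [NonAssocRing A] [Module F A]
    {n : ℕ} (hn : 2 ≤ n) (t : BTree n) (d : A →ₗ[F] A)
    (hd : IsLeibnizDerWrt F t d) :
    ∀ x y : A, d (x * y) = d x * y + x * d y :=
  key t d hn (d_one_zero hn t d hd) hd
end

section
/- If s and t are natural numbers with s dividing t, then every left Leibniz-derivation of order s+1 of an algebra A is a left Leibniz-derivation of order t+1 of A. -/
/-!
A left-normed product of `m + s + 1` factors is the left-normed product of `s + 1` factors whose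
first factor is the left-normed product of the first `m + 1` factors. Expanding `d` of it with the
order-`(s + 1)` rule and then expanding the first factor with the order-`(m + 1)` rule gives the
order-`(m + s + 1)` rule. So the `n` for which `d` is a left Leibniz-derivation of order `n + 1`
form an additive submonoid of `ℕ`, which contains every multiple of each of its elements.
-/

namespace Fin
variable {α : Type*} {m n : ℕ}

theorem update_append_castAdd (a : Fin m → α) (b : Fin n → α) (i : Fin m) (y : α) :
    Function.update (append a b) (castAdd n i) y = append (Function.update a i y) b := by
  ext k
  refine Fin.addCases (fun k => ?_) (fun k => ?_) k
  · simp [Function.update_apply]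
  · simp [Function.update_apply, Fin.ext_iff]; omega

theorem update_append_natAdd (a : Fin m → α) (b : Fin n → α) (j : Fin n) (y : α) :
    Function.update (append a b) (natAdd m j) y = append a (Function.update b j y) := by
  ext k
  refine Fin.addCases (fun k => ?_) (fun k => ?_) k
  · simp [Function.update_apply, Fin.ext_iff]; omega
  · simp [Function.update_apply]

end Fin

theorem List.foldl_mul_sum {A ι : Type*} [NonUnitalNonAssocSemiring A] (s : Finset ι) (f : ι → A)
    (l : List A) : l.foldl (· * ·) (∑ i ∈ s, f i) = ∑ i ∈ s, l.foldl (· * ·) (f i) := by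
  induction l generalizing f with
  | nil => rfl
  | cons c l ih => simp only [List.foldl_cons, Finset.sum_mul]; exact ih _

section LeftNormed
variable {A : Type*} [Mul A] [Zero A]

theorem lnProd_cons {n : ℕ} (c : A) (b : Fin n → A) :
    lnProd (Fin.cons c b : Fin (n + 1) → A) = (List.ofFn b).foldl (· * ·) c := by
  simp [lnProd]

theorem lnProd_cons_append {m s : ℕ} (c : A) (a : Fin m → A) (b : Fin s → A) :
    lnProd (Fin.cons c (Fin.append a b) : Fin (m + s + 1) → A) =
      (List.ofFn b).foldl (· * ·) (lnProd (Fin.cons c a : Fin (m + 1) → A)) := by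
  simp [lnProd_cons]

end LeftNormed

section LeibnizDer
variable {F A : Type*} [Field F] [NonUnitalNonAssocRing A] [Module F A]

theorem isLeftLeibnizDer_one (d : A →ₗ[F] A) : IsLeftLeibnizDer F 1 d := by
  intro x
  simp [lnProd]

theorem IsLeftLeibnizDer.order_add {d : A →ₗ[F] A} {m s : ℕ} (hm : IsLeftLeibnizDer F (m + 1) d)
    (hs : IsLeftLeibnizDer F (s + 1) d) : IsLeftLeibnizDer F (m + s + 1) d := by
  intro x
  obtain ⟨c, a, b, rfl⟩ : ∃ c a b, x = Fin.cons c (Fin.append a b) :=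
    ⟨x 0, _, _, by rw [Fin.append_castAdd_natAdd, Fin.cons_self_tail]⟩
  rw [lnProd_cons_append, ← lnProd_cons, hs, Fin.sum_univ_succ, Fin.sum_univ_succ,
    Fin.sum_univ_add, ← add_assoc]
  congr 1
  · rw [Fin.update_cons_zero, Fin.cons_zero, lnProd_cons, hm, List.foldl_mul_sum,
      Fin.sum_univ_succ]
    simp only [Fin.cons_zero, Fin.cons_succ, Fin.update_cons_zero, ← Fin.cons_update,
      Fin.append_left, Fin.update_append_castAdd, lnProd_cons_append]
  · refine Finset.sum_congr rfl fun j _ => ?_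
    simp only [Fin.cons_succ, ← Fin.cons_update, Fin.append_right, Fin.update_append_natAdd,
      lnProd_cons_append]
    exact lnProd_cons _ _

variable (F) in
def leftLeibnizOrders (d : A →ₗ[F] A) : AddSubmonoid ℕ where
  carrier := {n | IsLeftLeibnizDer F (n + 1) d}
  zero_mem' := isLeftLeibnizDer_one d
  add_mem' := IsLeftLeibnizDer.order_add

end LeibnizDer

/-- if `s ∣ t` then every left Leibniz-derivation of order `s+1` is
a left Leibniz-derivation of order `t+1`. -/
theorem stmt7 {F A : Type*} [Field F] [NonUnitalNonAssocRing A] [Module F A]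
    {s t : ℕ} (hst : s ∣ t) (d : A →ₗ[F] A)
    (hd : IsLeftLeibnizDer F (s + 1) d) :
    IsLeftLeibnizDer F (t + 1) d := by
  obtain ⟨k, rfl⟩ := hst
  rw [mul_comm, ← smul_eq_mul]
  exact nsmul_mem (show s ∈ leftLeibnizOrders F d from hd) k
end

section
/- Let A be an algebra, d a left Leibniz-derivation of order n of A, and x_1,...,x_{n-1} ∈ A. Then the commutator of d with the left multiplication operator by the left-normed product [x_1,...,x_{n-1}]_{l(n-1)} satisfies [d, L_{[x_1,...,x_{n-1}]}] = Σ_{i=1}^{n-1} L_{[x_1,...,d(x_i),...,x_{n-1}]}. -/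
theorem lnProd_snoc {A : Type*} [Mul A] [Zero A] {m : ℕ} (x : Fin (m + 1) → A) (a : A) :
    lnProd (Fin.snoc x a) = lnProd x * a := by
  rw [lnProd, List.ofFn_succ', List.concat_eq_append, List.foldl_append]
  simp only [Fin.succ_castSucc, Fin.snoc_castSucc, Fin.succ_last, Fin.snoc_last, List.foldl_cons,
    List.foldl_nil]
  rfl -- `Fin.snoc x a 0` reduces to `x 0`, and the left side to the unfolded `lnProd x * a`

theorem IsLeftLeibnizDer.apply_lnProd_mul {F A : Type*} [Field F] [NonUnitalNonAssocRing A]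
    [Module F A] {m : ℕ} {d : A →ₗ[F] A} (hd : IsLeftLeibnizDer F (m + 2) d)
    (x : Fin (m + 1) → A) (a : A) :
    d (lnProd x * a) = ∑ i, lnProd (Function.update x i (d (x i))) * a + lnProd x * d a := by
  have h := hd (Fin.snoc x a)
  rw [lnProd_snoc, Fin.sum_univ_castSucc] at h
  simpa only [Fin.snoc_castSucc, Fin.snoc_last, ← Fin.snoc_update, Fin.update_snoc_last,
    lnProd_snoc] using h

theorem stmt10_general {F A : Type*} [Field F] [NonUnitalNonAssocRing A] [Module F A]
    [SMulCommClass F A A]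
    {m : ℕ} (d : A →ₗ[F] A) (hd : IsLeftLeibnizDer F (m + 2) d) (x : Fin (m + 1) → A) :
    d ∘ₗ LinearMap.mulLeft F (lnProd x) - LinearMap.mulLeft F (lnProd x) ∘ₗ d =
      ∑ i, LinearMap.mulLeft F (lnProd (Function.update x i (d (x i)))) := by
  ext a
  simp [hd.apply_lnProd_mul]

/-- commutator of a left Leibniz-derivation of order `n = m + 2` with the
left multiplication by a left-normed product of `n - 1` elements. -/
theorem stmt10 {F A : Type*} [Field F] [NonUnitalNonAssocRing A] [Module F A]
    [SMulCommClass F A A] [IsScalarTower F A A]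
    {m : ℕ} (d : A →ₗ[F] A) (hd : IsLeftLeibnizDer F (m + 2) d) (x : Fin (m + 1) → A) :
    d ∘ₗ LinearMap.mulLeft F (lnProd x) - LinearMap.mulLeft F (lnProd x) ∘ₗ d =
      ∑ i, LinearMap.mulLeft F (lnProd (Function.update x i (d (x i)))) :=
  stmt10_general d hd x
end

section
/- In the n-dimensional anticommutative n-ary algebra with basis x_1,...,x_n and multiplication determined by [x_1,...,x_n] = x_2 (extended anticommutatively, with products of basis elements with repetitions equal to zero), when n is even the linear map D defined by D(x_1) = x_1, D(x_2) = x_2, D(x_3) = −(1/2)x_3, D(x_4) = −(1/2)x_4, and D(x_j) = (−1)^j x_j for j > 4 is an invertible derivation of the n-ary algebra. -/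
open Function

section Derivation

variable {R M ι : Type*} [CommRing R] [AddCommGroup M] [Module R M] [Fintype ι] [DecidableEq ι]

def IsNaryDerivation (m : MultilinearMap R (fun _ : ι => M) M) (D : M →ₗ[R] M) : Prop :=
  ∀ y : ι → M, D (m y) = ∑ i, m (update y i (D (y i)))

omit [Fintype ι] in
lemma update_id_apply_eq_update (D : M →ₗ[R] M) (y : ι → M) (i : ι) :
    (fun j => update (fun _ : ι => (LinearMap.id : M →ₗ[R] M)) i D j (y j)) =
      update y i (D (y i)) := by
  ext j
  rcases eq_or_ne j i with rfl | hj <;> simp [update_of_ne, *]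

lemma isNaryDerivation_of_basis {κ : Type*} (B : Module.Basis κ R M)
    (m : MultilinearMap R (fun _ : ι => M) M) (D : M →ₗ[R] M)
    (h : ∀ v : ι → κ,
      D (m fun j => B (v j)) = ∑ i, m (update (fun j => B (v j)) i (D (B (v i))))) :
    IsNaryDerivation m D := by
  have key : D.compMultilinearMap m =
      ∑ i, m.compLinearMap (update (fun _ : ι => (LinearMap.id : M →ₗ[R] M)) i D) :=
    Module.Basis.ext_multilinear (fun _ => B) fun v => by
      simpa [sum_apply, update_id_apply_eq_update] using h v
  intro y
  simpa [sum_apply, update_id_apply_eq_update] using DFunLike.congr_fun key y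

omit [Fintype ι] in
lemma MultilinearMap.sum_update_eigenvector {κ : Type*}
    (m : MultilinearMap R (fun _ : ι => M) M) (D : M →ₗ[R] M) (b : κ → M) (c : κ → R)
    (hD : ∀ k, D (b k) = c k • b k) (v : ι → κ) (s : Finset ι) :
    ∑ i ∈ s, m (update (fun j => b (v j)) i (D (b (v i)))) =
      (∑ i ∈ s, c (v i)) • m fun j => b (v j) := by
  simp [hD, m.map_update_smul, Finset.sum_smul]

/-- On a tuple of basis vectors `f` vanishes unless the tuple is a permutation of the basis, and
then both sides of the Leibniz rule are `sign σ` times their value at the basis itself. -/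
theorem AlternatingMap.isNaryDerivation_of_eigenbasis (f : M [⋀^ι]→ₗ[R] M)
    (B : Module.Basis ι R M) (D : M →ₗ[R] M) (c : ι → R) (hD : ∀ i, D (B i) = c i • B i)
    (hf : D (f B) = (∑ i, c i) • f B) :
    IsNaryDerivation f.toMultilinearMap D := by
  refine isNaryDerivation_of_basis B _ D fun v => ?_
  rw [f.toMultilinearMap.sum_update_eigenvector D B c hD]
  by_cases hv : Injective v
  · set σ : Equiv.Perm ι := Equiv.ofBijective v (Finite.injective_iff_bijective.mp hv)
    have hperm : (fun j => B (v j)) = B ∘ σ := rfl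
    have hsum : ∑ i, c (v i) = ∑ i, c i := Equiv.sum_comp σ c
    simp only [coe_multilinearMap, hperm, f.map_perm, hsum, Units.smul_def, map_zsmul, hf,
      smul_comm (∑ i, c i)]
  · obtain ⟨i, j, hvij, hij⟩ := not_injective_iff.mp hv
    have hzero : f (fun k => B (v k)) = 0 := f.map_eq_zero_of_eq _ (by simp [hvij]) hij
    simp [hzero]

end Derivation

lemma Module.Basis.bijective_of_apply_eq_smul {R M ι : Type*} [CommRing R] [AddCommGroup M]
    [Module R M] (B : Module.Basis ι R M) (D : M →ₗ[R] M) (c : ι → Rˣ)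
    (hD : ∀ i, D (B i) = c i • B i) : Bijective D := by
  have : D = B.equiv (B.unitsSMul c) (Equiv.refl ι) :=
    B.ext fun i => by simp [hD, Module.Basis.unitsSMul_apply]
  rw [this]
  exact LinearEquiv.bijective _

/-- The eigenvalue of `x_{j+1}`: the basis is indexed from `0`. -/
def williamsEigenvalue (F : Type*) [Field F] (j : ℕ) : F :=
  if j < 2 then 1 else if j < 4 then -(1 / 2) else (-1) ^ (j + 1)

lemma williamsEigenvalue_ne_zero (F : Type*) [Field F] [CharZero F] (j : ℕ) :
    williamsEigenvalue F j ≠ 0 := by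
  unfold williamsEigenvalue
  split_ifs <;> norm_num

lemma sum_range_williamsEigenvalue (F : Type*) [Field F] [CharZero F] {n : ℕ} (hn : 4 ≤ n)
    (hne : Even n) : ∑ j ∈ Finset.range n, williamsEigenvalue F j = 1 := by
  have htail : ∑ j ∈ Finset.Ico 4 n, williamsEigenvalue F j = 0 := by
    have hsign : ∀ N, Even N → ∑ j ∈ Finset.range N, (-1 : F) ^ (j + 1) = 0 := fun N hN => by
      simp [pow_succ, neg_one_geom_sum, hN]
    rw [Finset.sum_congr rfl fun j hj => by
        rw [williamsEigenvalue, if_neg (by simp at hj; omega), if_neg (by simp at hj; omega)],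
      Finset.sum_Ico_eq_sub _ hn, hsign n hne, hsign 4 (by decide), sub_zero]
  rw [Finset.range_eq_Ico, ← Finset.sum_Ico_consecutive _ (Nat.zero_le 4) hn, htail,
    ← Finset.range_eq_Ico]
  norm_num [Finset.sum_range_succ, williamsEigenvalue]

/-- the corrected Williams example. In the `n`-dimensional alternating
`n`-ary algebra with `[x₁,...,xₙ] = x₂` (`n` even), the map `D` with
`D x₁ = x₁, D x₂ = x₂, D x₃ = -½x₃, D x₄ = -½x₄, D x_j = (-1)^j x_j (j > 4)`
is an invertible derivation of the `n`-ary algebra. -/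
theorem stmt17 {F V : Type*} [Field F] [CharZero F] [AddCommGroup V] [Module F V]
    {n : ℕ} (hn4 : 4 ≤ n) (hne : Even n) (B : Module.Basis (Fin n) F V)
    (m : MultilinearMap F (fun _ : Fin n => V) V)
    (halt : ∀ (x : Fin n → V) (i j : Fin n), i ≠ j → x i = x j → m x = 0)
    (hB : m (fun i => B i) = B ⟨1, by omega⟩)
    (D : V →ₗ[F] V)
    (hD0 : D (B ⟨0, by omega⟩) = B ⟨0, by omega⟩)
    (hD1 : D (B ⟨1, by omega⟩) = B ⟨1, by omega⟩)
    (hD2 : D (B ⟨2, by omega⟩) = (-(1 / 2) : F) • B ⟨2, by omega⟩)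
    (hD3 : D (B ⟨3, by omega⟩) = (-(1 / 2) : F) • B ⟨3, by omega⟩)
    (hDj : ∀ i : Fin n, 4 ≤ (i : ℕ) →
      D (B i) = ((-1 : F) ^ ((i : ℕ) + 1)) • B i) :
    Function.Bijective D ∧
      ∀ y : Fin n → V, D (m y) = ∑ i, m (Function.update y i (D (y i))) := by
  let c : Fin n → Fˣ := fun i => Units.mk0 _ (williamsEigenvalue_ne_zero F i)
  have hD : ∀ i, D (B i) = c i • B i := by
    rintro ⟨_ | _ | _ | _ | i, hi⟩
    · simpa [c, williamsEigenvalue] using hD0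
    · simpa [c, williamsEigenvalue] using hD1
    · simpa [c, williamsEigenvalue] using hD2
    · simpa [c, williamsEigenvalue] using hD3
    · change D (B ⟨i + 4, hi⟩) = _
      rw [hDj _ (by simp)]
      simp [c, williamsEigenvalue]
  have hsum : ∑ i, (c i : F) = 1 := by
    simpa [c, Fin.sum_univ_eq_sum_range] using sum_range_williamsEigenvalue F hn4 hne
  let f : V [⋀^Fin n]→ₗ[F] V := ⟨m, fun x i j hx hij => halt x i j hij hx⟩
  refine ⟨B.bijective_of_apply_eq_smul D c hD, ?_⟩
  refine f.isNaryDerivation_of_eigenbasis B D (fun i => c i) hD ?_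
  change D (m fun i => B i) = _ • m fun i => B i
  rw [hB, hsum, one_smul, hD1]
end

section
/- Let A be an algebra, n ≥ 2, d a left Leibniz-derivation of order n of A, and I a subspace of A that is an ideal for the n-ary left-normed product (i.e., [A,...,I,...,A]_{l(n)} ⊆ I in each argument). Then for every k ≥ 1, d(I)^{(k)_n} ⊆ I + d^{n^k}(I^{(k)_n}), where B^{(1)_n} = [B,...,B]_{l(n)} and B^{(t+1)_n} = [B^{(t)_n},...,B^{(t)_n}]_{l(n)}. -/
/-- The span of all left-normed `n`-ary products of elements of `S`. -/
def nProd (F : Type*) {A : Type*} [Field F] [NonUnitalNonAssocRing A] [Module F A]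
    (n : ℕ) (S : Submodule F A) : Submodule F A :=
  Submodule.span F {z | ∃ x : Fin n → A, (∀ i, x i ∈ S) ∧ z = lnProd x}

/-- The `n`-ary derived series: `derivedN F n S k = S^{(k)ₙ}` (with `S^{(0)ₙ} = S`). -/
def derivedN (F : Type*) {A : Type*} [Field F] [NonUnitalNonAssocRing A] [Module F A]
    (n : ℕ) (S : Submodule F A) : ℕ → Submodule F A
  | 0 => S
  | k + 1 => nProd F n (derivedN F n S k)


/-!
Induction on `k`, with `N = n ^ k`. Since `I` is an ideal for the `n`-ary product, a left-normed
product only depends on its factors modulo `I`, so by induction a generator of `d(I)^{(k+1)ₙ}` is,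
modulo `I`, a product of factors `d^N wᵢ` with `wᵢ ∈ I^{(k)ₙ}`. Iterating the Leibniz rule,
`d^{nN}(w₁ ⋯ wₙ)` is the sum, over all ways of distributing the `nN` applications of `d` among the
`n` factors, of the corresponding products. A term in which some factor receives fewer than `N`
applications lies in `I`, because `d^s(I^{(k)ₙ}) ⊆ I` for `s < n ^ k`; every other term receives
exactly `N` everywhere and equals `∏ d^N wᵢ`. So `d^{nN}(w₁ ⋯ wₙ) ≡ c · ∏ d^N wᵢ` modulo `I` with
a positive integer `c`, which is invertible in characteristic zero.
-/

open Finset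

section LeftNormed

variable {A : Type*}

lemma lnProd_one [Mul A] [Zero A] (x : Fin 1 → A) : lnProd x = x 0 := by
  simp [lnProd]

lemma lnProd_succ [Mul A] [Zero A] {n : ℕ} (x : Fin (n + 2) → A) :
    lnProd x = lnProd (Fin.init x) * x (Fin.last (n + 1)) := by
  change (List.ofFn fun i : Fin (n + 1) => x i.succ).foldl (· * ·) (x 0) = _
  rw [List.ofFn_succ', List.concat_eq_append, List.foldl_concat]
  rfl

variable [NonUnitalNonAssocRing A]

lemma lnProd_update_sub {n : ℕ} (x : Fin n → A) (j : Fin n) (a b : A) :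
    lnProd (Function.update x j (a - b)) =
      lnProd (Function.update x j a) - lnProd (Function.update x j b) := by
  induction n with
  | zero => exact j.elim0
  | succ n ih =>
    cases n with
    | zero => simp [lnProd_one, Fin.fin_one_eq_zero j]
    | succ n =>
      induction j using Fin.lastCases with
      | last => simp only [lnProd_succ, Fin.init_update_last, Function.update_self, mul_sub]
      | cast i =>
        simp only [lnProd_succ, Fin.init_update_castSucc, ih,
          Function.update_of_ne (Fin.castSucc_lt_last i).ne', sub_mul]

lemma lnProd_sub_lnProd_mem {R : Type*} [Semiring R] [Module R A] {n : ℕ} {I : Submodule R A}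
    (hI : ∀ (x : Fin n → A) (i : Fin n), x i ∈ I → lnProd x ∈ I)
    {x y : Fin n → A} (h : ∀ i, x i - y i ∈ I) : lnProd x - lnProd y ∈ I := by
  classical
  suffices ∀ s : Finset (Fin n), lnProd (s.piecewise x y) - lnProd y ∈ I by
    simpa using this univ
  intro s
  induction s using Finset.induction_on with
  | empty => simp
  | insert j s hj ih =>
    set z := s.piecewise x y
    have hzj : Function.update z j (y j) = z := by
      rw [← Finset.piecewise_eq_of_notMem s x y hj, Function.update_eq_self]
    have hslot : lnProd (Function.update z j (x j)) - lnProd z ∈ I := by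
      rw [← hzj, Function.update_idem, ← lnProd_update_sub]
      exact hI _ j (by simpa using h j)
    rw [Finset.piecewise_insert, ← sub_add_sub_cancel _ (lnProd z)]
    exact add_mem hslot ih

end LeftNormed

section FiberCard

def fiberCard {m n : ℕ} (f : Fin m → Fin n) (i : Fin n) : ℕ := #{t | f t = i}

lemma sum_fiberCard {m n : ℕ} (f : Fin m → Fin n) : ∑ i, fiberCard f i = m := by
  simpa [fiberCard] using (card_eq_sum_card_fiberwise (f := f) (s := univ) (t := univ) (by simp)).symm

lemma fiberCard_cons {m n : ℕ} (j : Fin n) (f : Fin m → Fin n) (i : Fin n) :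
    fiberCard (Fin.cons j f : Fin (m + 1) → Fin n) i = fiberCard f i + if j = i then 1 else 0 := by
  simp only [fiberCard, card_eq_sum_ones, sum_filter, Fin.sum_univ_succ, Fin.cons_zero,
    Fin.cons_succ]
  ring

lemma exists_fiberCard_lt {m n N : ℕ} {f : Fin m → Fin n} (hm : m ≤ n * N)
    (hf : ¬ ∀ i, fiberCard f i = N) : ∃ i, fiberCard f i < N := by
  by_contra! hge
  refine hf fun i => ((sum_eq_sum_iff_of_le fun i _ => hge i).1 ?_ i (mem_univ i)).symm
  refine le_antisymm (sum_le_sum fun i _ => hge i) ?_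
  simpa [sum_fiberCard] using hm

lemma exists_forall_fiberCard_eq (n N : ℕ) : ∃ f : Fin (N * n) → Fin n, ∀ i, fiberCard f i = N := by
  refine ⟨fun t => (finProdFinEquiv.symm t).2, fun i => ?_⟩
  rw [fiberCard, card_eq_sum_ones, sum_filter,
    ← finProdFinEquiv.sum_comp fun t => if (finProdFinEquiv.symm t).2 = i then 1 else 0]
  simp only [Equiv.symm_apply_apply, Fintype.sum_prod_type]
  simp

end FiberCard

section Derivation

variable {F A : Type*} [Field F] [NonUnitalNonAssocRing A] [Module F A] {n : ℕ}
  {d : A →ₗ[F] A}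

-- `f t` is the factor on which the `t`-th application of `d` falls.
lemma IsLeftLeibnizDer.pow_apply_lnProd (hd : IsLeftLeibnizDer F n d) (m : ℕ)
    (x : Fin n → A) :
    (d ^ m) (lnProd x) = ∑ f : Fin m → Fin n, lnProd fun i => (d ^ fiberCard f i) (x i) := by
  induction m generalizing x with
  | zero => simp [fiberCard]
  | succ m ih =>
    rw [pow_succ, Module.End.mul_apply, hd x, map_sum,
      ← (Fin.consEquiv fun _ => Fin n).sum_comp, Fintype.sum_prod_type]
    refine sum_congr rfl fun j _ => ?_
    rw [ih]
    refine sum_congr rfl fun f _ => congrArg lnProd (funext fun i => ?_)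
    simp only [Fin.consEquiv, Equiv.coe_fn_mk, fiberCard_cons]
    rcases eq_or_ne j i with rfl | hji
    · rw [Function.update_self, if_pos rfl, pow_succ, Module.End.mul_apply]
    · rw [Function.update_of_ne hji.symm, if_neg hji, add_zero]

variable {I : Submodule F A}

lemma lnProd_pow_fiberCard_mem (hI : ∀ (x : Fin n → A) (i : Fin n), x i ∈ I → lnProd x ∈ I)
    {N m : ℕ} {w : Fin n → A} (hw : ∀ i, ∀ r < N, (d ^ r) (w i) ∈ I) {f : Fin m → Fin n}
    (hm : m ≤ n * N) (hf : ¬ ∀ i, fiberCard f i = N) :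
    lnProd (fun i => (d ^ fiberCard f i) (w i)) ∈ I := by
  obtain ⟨i, hi⟩ := exists_fiberCard_lt hm hf
  exact hI _ i (hw i _ hi)

lemma derivedN_le_comap_pow (hd : IsLeftLeibnizDer F n d)
    (hI : ∀ (x : Fin n → A) (i : Fin n), x i ∈ I → lnProd x ∈ I) (k : ℕ) :
    ∀ s < n ^ k, derivedN F n I k ≤ I.comap (d ^ s) := by
  induction k with
  | zero =>
    intro s hs z hz
    simpa [Nat.lt_one_iff.1 hs, derivedN] using hz
  | succ k ih =>
    intro s hs
    refine Submodule.span_le.2 ?_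
    rintro _ ⟨w, hw, rfl⟩
    have hs' : s ≤ n * n ^ k := by rw [← pow_succ']; exact hs.le
    change (d ^ s) (lnProd w) ∈ I
    rw [hd.pow_apply_lnProd]
    refine sum_mem fun f _ => lnProd_pow_fiberCard_mem hI (fun i r hr => ih r hr (hw i)) hs'
      fun hf => hs.ne ?_
    rw [← sum_fiberCard f, sum_congr rfl fun i _ => hf i, sum_const, card_univ,
      Fintype.card_fin, smul_eq_mul, pow_succ']

lemma lnProd_pow_mem_sup_map_derivedN [CharZero F] (hd : IsLeftLeibnizDer F n d)
    (hI : ∀ (x : Fin n → A) (i : Fin n), x i ∈ I → lnProd x ∈ I) {k : ℕ} {w : Fin n → A}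
    (hw : ∀ i, w i ∈ derivedN F n I k) :
    lnProd (fun i => (d ^ n ^ k) (w i)) ∈
      I ⊔ (derivedN F n I (k + 1)).map (d ^ n ^ (k + 1)) := by
  classical
  set N := n ^ k
  set L := lnProd fun i => (d ^ N) (w i)
  set good := ({f | ∀ i, fiberCard f i = N} : Finset (Fin (N * n) → Fin n))
  set bad := ({f | ¬ ∀ i, fiberCard f i = N} : Finset (Fin (N * n) → Fin n))
  have hsplit : (d ^ (N * n)) (lnProd w) =
      (#good : F) • L + ∑ f ∈ bad, lnProd fun i => (d ^ fiberCard f i) (w i) := by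
    rw [hd.pow_apply_lnProd, ← sum_filter_add_sum_filter_not univ fun f => ∀ i, fiberCard f i = N,
      Nat.cast_smul_eq_nsmul, ← sum_const]
    congr 1
    exact sum_congr rfl fun f hf => by simp_rw [(mem_filter.1 hf).2]; rfl
  have hbad : ∑ f ∈ bad, lnProd (fun i => (d ^ fiberCard f i) (w i)) ∈ I :=
    sum_mem fun f hf => lnProd_pow_fiberCard_mem hI
      (fun i r hr => derivedN_le_comap_pow hd hI k r hr (hw i)) (mul_comm N n).le
      (mem_filter.1 hf).2
  have hgood : (#good : F) ≠ 0 := by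
    obtain ⟨f, hf⟩ := exists_forall_fiberCard_eq n N
    exact Nat.cast_ne_zero.2 (card_ne_zero_of_mem (mem_filter.2 ⟨mem_univ f, hf⟩))
  have hw' : lnProd w ∈ derivedN F n I (k + 1) := Submodule.subset_span ⟨w, hw, rfl⟩
  rw [← inv_smul_smul₀ hgood L, eq_sub_of_add_eq hsplit.symm, pow_succ]
  exact Submodule.smul_mem _ _ (sub_mem (Submodule.mem_sup_right (Submodule.mem_map_of_mem hw'))
    (Submodule.mem_sup_left hbad))

end Derivation

lemma derivedN_map_le_sup {F A : Type*} [Field F] [CharZero F] [NonUnitalNonAssocRing A]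
    [Module F A] {n : ℕ} {d : A →ₗ[F] A} (hd : IsLeftLeibnizDer F n d) {I : Submodule F A}
    (hI : ∀ (x : Fin n → A) (i : Fin n), x i ∈ I → lnProd x ∈ I) (k : ℕ) :
    derivedN F n (I.map d) k ≤ I ⊔ (derivedN F n I k).map (d ^ n ^ k) := by
  induction k with
  | zero => simp [derivedN]
  | succ k ih =>
    refine Submodule.span_le.2 ?_
    rintro _ ⟨x, hx, rfl⟩
    have hdecomp : ∀ i, ∃ u ∈ I, ∃ w ∈ derivedN F n I k, x i = u + (d ^ n ^ k) w := by
      intro i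
      obtain ⟨u, hu, _, ⟨w, hw, rfl⟩, hx⟩ := Submodule.mem_sup.1 (ih (hx i))
      exact ⟨u, hu, w, hw, hx.symm⟩
    choose u hu w hw hxuw using hdecomp
    have hdiff : lnProd x - lnProd (fun i => (d ^ n ^ k) (w i)) ∈ I :=
      lnProd_sub_lnProd_mem hI fun i => by rw [hxuw i, add_sub_cancel_right]; exact hu i
    rw [← sub_add_cancel (lnProd x) (lnProd fun i => (d ^ n ^ k) (w i))]
    exact add_mem (Submodule.mem_sup_left hdiff) (lnProd_pow_mem_sup_map_derivedN hd hI hw)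

theorem stmt18_general {F A : Type*} [Field F] [CharZero F] [NonUnitalNonAssocRing A] [Module F A]
    {n : ℕ} (d : A →ₗ[F] A) (hd : IsLeftLeibnizDer F n d)
    (I : Submodule F A)
    (hI : ∀ (x : Fin n → A) (i : Fin n), x i ∈ I → lnProd x ∈ I) :
    ∀ k : ℕ, 1 ≤ k →
      derivedN F n (I.map d) k ≤ I ⊔ (derivedN F n I k).map (d ^ (n ^ k)) :=
  fun k _ => derivedN_map_le_sup hd hI k

/-- if `I` is an ideal for the `n`-ary left-normed product and `d` is a left
Leibniz-derivation of order `n`, then `d(I)^{(k)ₙ} ⊆ I + d^{nᵏ}(I^{(k)ₙ})` for all `k ≥ 1`. -/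
theorem stmt18 {F A : Type*} [Field F] [CharZero F] [NonUnitalNonAssocRing A] [Module F A]
    {n : ℕ} (hn : 2 ≤ n) (d : A →ₗ[F] A) (hd : IsLeftLeibnizDer F n d)
    (I : Submodule F A)
    (hI : ∀ (x : Fin n → A) (i : Fin n), x i ∈ I → lnProd x ∈ I) :
    ∀ k : ℕ, 1 ≤ k →
      derivedN F n (I.map d) k ≤ I ⊔ (derivedN F n I k).map (d ^ (n ^ k)) :=
  stmt18_general d hd I hI
end
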